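/- Let r ≥ 1 be a real number and n ∈ ℕ with n > r + 2. Then for every integer k with 2 ≤ k ≤ n + 1 and every z with |z| ≤ r, |T_{n,k}(z) − z^k − k(k−1)(z+2)z^{k−1}/(2n)| ≤ (k−1)(r+1)^k B_{k,r} / n², where B_{k,r} = (k−1)²(k−2)r² + 2(k−1)(k−2)(2k−3)(r+1) + (r+1)(r+2)·(k+1)!. -/

import Mathlib

/-!
`T n k` is the evaluation of a polynomial `Tpoly n k` of degree at most `k`, obtained by iterating
the operator `L_k p = (z(1 + z) p' + (n z + k) p) / n`. The error
`e_k = T_{n,k} - z^k - binom(k,2) (z + 2) z^(k-1) / n` vanishes for `k = 2` and satisfies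
`e_{k+1} = L_k e_k + R_k` with an explicit remainder `R_k` of size `O(k³ (r+1)^k / n²)`.
All estimates are made in the weighted `ℓ¹` norm `‖∑ aᵢ zⁱ‖_r = ∑ ‖aᵢ‖ rⁱ`, which dominates
`|p(z)|` on `|z| ≤ r`, is submultiplicative and satisfies `‖z p'‖_r ≤ (deg p) ‖p‖_r`.
Hence `‖L_k‖_r ≤ 2(r + 1)` as long as `k ≤ n`, and the bound follows by induction on `k`,
the factorial in `B_{k,r}` absorbing the remainders.
-/

/-- The polynomials `T_{n,k}` defined by `T_{n,0}(z) = 1` and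
`T_{n,k+1}(z) = (z(1+z)/n) · T_{n,k}′(z) + ((nz+k)/n) · T_{n,k}(z)`. -/
noncomputable def T (n : ℕ) : ℕ → ℂ → ℂ
  | 0 => fun _ => 1
  | k + 1 => fun z =>
      (z * (1 + z) / (n : ℂ)) * deriv (T n k) z + (((n : ℂ) * z + (k : ℂ)) / (n : ℂ)) * T n k z

/-- `B_{k,r} = (k−1)²(k−2)r² + 2(k−1)(k−2)(2k−3)(r+1) + (r+1)(r+2)·(k+1)!`. -/
noncomputable def B (k : ℕ) (r : ℝ) : ℝ :=
  ((k : ℝ) - 1) ^ 2 * ((k : ℝ) - 2) * r ^ 2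
    + 2 * ((k : ℝ) - 1) * ((k : ℝ) - 2) * (2 * (k : ℝ) - 3) * (r + 1)
    + (r + 1) * (r + 2) * ((k + 1).factorial : ℝ)

open Polynomial Finset

section WeightedNorm

variable {𝕜 : Type*} [NormedField 𝕜]

noncomputable def weightedNorm (r : ℝ) (p : 𝕜[X]) : ℝ := p.sum fun i a => ‖a‖ * r ^ i

theorem weightedNorm_eq_sum_range (r : ℝ) (p : 𝕜[X]) {m : ℕ} (hm : p.natDegree < m) :
    weightedNorm r p = ∑ i ∈ range m, ‖p.coeff i‖ * r ^ i :=
  p.sum_over_range' (by simp) m hm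

theorem weightedNorm_nonneg {r : ℝ} (hr : 0 ≤ r) (p : 𝕜[X]) : 0 ≤ weightedNorm r p :=
  sum_nonneg fun _ _ => by positivity

theorem norm_eval_le_weightedNorm {r : ℝ} (p : 𝕜[X]) {z : 𝕜} (hz : ‖z‖ ≤ r) :
    ‖p.eval z‖ ≤ weightedNorm r p := by
  rw [eval_eq_sum, weightedNorm, Polynomial.sum_def, Polynomial.sum_def]
  refine (norm_sum_le _ _).trans (sum_le_sum fun i _ => ?_)
  rw [norm_mul, norm_pow]
  gcongr

theorem weightedNorm_add_le {r : ℝ} (hr : 0 ≤ r) (p q : 𝕜[X]) :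
    weightedNorm r (p + q) ≤ weightedNorm r p + weightedNorm r q := by
  set m := max (max p.natDegree q.natDegree) (p + q).natDegree + 1
  rw [weightedNorm_eq_sum_range r p (m := m) (by omega), weightedNorm_eq_sum_range r q (m := m)
    (by omega), weightedNorm_eq_sum_range r _ (m := m) (by omega), ← sum_add_distrib]
  refine sum_le_sum fun i _ => ?_
  rw [coeff_add, ← add_mul]
  gcongr
  exact norm_add_le _ _

theorem weightedNorm_sum_le {r : ℝ} (hr : 0 ≤ r) {ι : Type*} (s : Finset ι) (f : ι → 𝕜[X]) :
    weightedNorm r (∑ i ∈ s, f i) ≤ ∑ i ∈ s, weightedNorm r (f i) :=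
  le_sum_of_subadditive _ (by simp [weightedNorm]) (weightedNorm_add_le hr) s f

theorem weightedNorm_C_mul (r : ℝ) (a : 𝕜) (p : 𝕜[X]) :
    weightedNorm r (C a * p) = ‖a‖ * weightedNorm r p := by
  rw [weightedNorm_eq_sum_range r _ (Nat.lt_succ_of_le (natDegree_C_mul_le a p)),
    weightedNorm_eq_sum_range r p (Nat.lt_succ_self _), mul_sum]
  simp only [coeff_C_mul, norm_mul, mul_assoc]

theorem weightedNorm_X_mul (r : ℝ) (p : 𝕜[X]) : weightedNorm r (X * p) = r * weightedNorm r p := by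
  have hdeg : (X * p).natDegree < p.natDegree + 1 + 1 :=
    Nat.lt_succ_of_le (natDegree_mul_le_of_le natDegree_X_le le_rfl |>.trans (by omega))
  rw [weightedNorm_eq_sum_range r _ hdeg, weightedNorm_eq_sum_range r p (Nat.lt_succ_self _),
    sum_range_succ', mul_sum]
  simp only [coeff_X_mul, coeff_X_mul_zero, norm_zero, zero_mul, add_zero, pow_succ]
  exact sum_congr rfl fun i _ => by ring

theorem weightedNorm_X_pow_mul (r : ℝ) (j : ℕ) (p : 𝕜[X]) :
    weightedNorm r (X ^ j * p) = r ^ j * weightedNorm r p := by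
  induction j with
  | zero => simp
  | succ j ih => rw [pow_succ', mul_assoc, weightedNorm_X_mul, ih, pow_succ', mul_assoc]

theorem weightedNorm_C (r : ℝ) (a : 𝕜) : weightedNorm r (C a) = ‖a‖ := by
  simp [weightedNorm]

theorem weightedNorm_one (r : ℝ) : weightedNorm r (1 : 𝕜[X]) = 1 := by
  simpa using weightedNorm_C r (1 : 𝕜)

theorem weightedNorm_X (r : ℝ) : weightedNorm r (X : 𝕜[X]) = r := by
  simpa [weightedNorm_one] using weightedNorm_X_mul r (1 : 𝕜[X])

theorem weightedNorm_mul_le {r : ℝ} (hr : 0 ≤ r) (p q : 𝕜[X]) :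
    weightedNorm r (p * q) ≤ weightedNorm r p * weightedNorm r q := by
  conv_lhs => rw [p.as_sum_support_C_mul_X_pow, sum_mul]
  refine (weightedNorm_sum_le hr _ _).trans_eq ?_
  simp_rw [mul_assoc, weightedNorm_C_mul, weightedNorm_X_pow_mul, ← mul_assoc]
  exact (sum_mul _ _ _).symm

theorem coeff_X_mul_derivative {R : Type*} [Semiring R] (p : R[X]) (i : ℕ) :
    (X * derivative p).coeff i = i * p.coeff i := by
  cases i with
  | zero => simp
  | succ i => rw [coeff_X_mul, coeff_derivative, ← Nat.cast_succ]; exact (Nat.cast_comm _ _).symm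

theorem natDegree_X_mul_derivative_le {R : Type*} [Semiring R] (p : R[X]) :
    (X * derivative p).natDegree ≤ p.natDegree :=
  natDegree_le_iff_coeff_eq_zero.2 fun i hi => by
    rw [coeff_X_mul_derivative, coeff_eq_zero_of_natDegree_lt hi, mul_zero]

theorem weightedNorm_X_mul_derivative_le {r : ℝ} (hr : 0 ≤ r) {p : 𝕜[X]} {k : ℕ}
    (hp : p.natDegree ≤ k) :
    weightedNorm r (X * derivative p) ≤ k * weightedNorm r p := by
  have hlt : p.natDegree < k + 1 := Nat.lt_succ_of_le hp
  rw [weightedNorm_eq_sum_range r _ ((natDegree_X_mul_derivative_le p).trans_lt hlt),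
    weightedNorm_eq_sum_range r p hlt, mul_sum]
  refine sum_le_sum fun i hi => ?_
  have hik : (i : ℝ) ≤ k := by exact_mod_cast Nat.lt_succ_iff.1 (mem_range.1 hi)
  rw [coeff_X_mul_derivative, norm_mul, ← mul_assoc]
  gcongr
  exact (by simpa using Nat.norm_cast_le (α := 𝕜) i : ‖(i : 𝕜)‖ ≤ i).trans hik

end WeightedNorm

noncomputable def Tstep (n k : ℕ) (p : ℂ[X]) : ℂ[X] :=
  C (n : ℂ)⁻¹ * ((1 + X) * (X * derivative p) + (C (n : ℂ) * X + C (k : ℂ)) * p)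

noncomputable def Tpoly (n : ℕ) : ℕ → ℂ[X]
  | 0 => 1
  | k + 1 => Tstep n k (Tpoly n k)

noncomputable def corrTerm (k : ℕ) : ℂ[X] := (X + 2) * X ^ (k - 1)

-- `k.choose 2 / n` is the paper's `k(k-1)/(2n)`.
noncomputable def Terr (n k : ℕ) : ℂ[X] :=
  Tpoly n k - X ^ k - C ((k.choose 2 : ℂ) / n) * corrTerm k

-- With `c k = k.choose 2 / n` and `W k = corrTerm k`, for `k ≥ 1`:
-- `Tstep n k (X ^ k + c k • W k) = X ^ (k + 1) + c (k + 1) • W (k + 1) + Trem n k`.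
noncomputable def Trem (n k : ℕ) : ℂ[X] :=
  C ((k.choose 2 : ℂ) / n ^ 2) * ((1 + X) * (X * derivative (corrTerm k)) + C (k : ℂ) * corrTerm k)

theorem T_eq_eval (n k : ℕ) : T n k = fun z => (Tpoly n k).eval z := by
  induction k with
  | zero => funext z; simp [T, Tpoly]
  | succ k ih =>
    funext z
    simp only [T, Tpoly, Tstep, ih, Polynomial.deriv, eval_add, eval_mul, eval_C, eval_X, eval_one]
    ring

theorem natDegree_Tstep_le (n k : ℕ) {p : ℂ[X]} {m : ℕ} (hp : p.natDegree ≤ m) :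
    (Tstep n k p).natDegree ≤ m + 1 := by
  have hlin : (1 + X : ℂ[X]).natDegree ≤ 1 := by compute_degree
  have hlin' : (C (n : ℂ) * X + C (k : ℂ)).natDegree ≤ 1 := by compute_degree
  refine (natDegree_C_mul_le _ _).trans (natDegree_add_le_of_degree_le ?_ ?_)
  · exact (natDegree_mul_le_of_le hlin ((natDegree_X_mul_derivative_le p).trans hp)).trans_eq
      (add_comm _ _)
  · exact (natDegree_mul_le_of_le hlin' hp).trans_eq (add_comm _ _)

theorem natDegree_Tpoly_le (n k : ℕ) : (Tpoly n k).natDegree ≤ k := by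
  induction k with
  | zero => simp [Tpoly]
  | succ k ih => exact natDegree_Tstep_le n k ih

theorem natDegree_corrTerm_le {k : ℕ} (hk : 1 ≤ k) : (corrTerm k).natDegree ≤ k := by
  have hlin : (X + 2 : ℂ[X]).natDegree ≤ 1 := by compute_degree
  exact (natDegree_mul_le_of_le hlin (natDegree_X_pow_le _)).trans (by omega)

theorem natDegree_Terr_le (n : ℕ) {k : ℕ} (hk : 1 ≤ k) : (Terr n k).natDegree ≤ k :=
  natDegree_sub_le_of_le (natDegree_sub_le_of_le (natDegree_Tpoly_le n k) (natDegree_X_pow_le k))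
    ((natDegree_C_mul_le _ _).trans (natDegree_corrTerm_le hk)) |>.trans (by omega)

theorem Terr_two {n : ℕ} (hn : n ≠ 0) : Terr n 2 = 0 := by
  have hn' : (n : ℂ) ≠ 0 := Nat.cast_ne_zero.2 hn
  apply Polynomial.funext
  intro z
  simp only [Terr, Tpoly, Tstep, corrTerm, Nat.cast_choose_two, derivative_mul, derivative_add,
    derivative_X, derivative_one, derivative_C, derivative_zero, eval_add, eval_mul, eval_sub,
    eval_pow, eval_C, eval_X, eval_one, eval_zero, eval_ofNat]
  field_simp
  ring

theorem Terr_succ {n k : ℕ} (hn : n ≠ 0) (hk : 2 ≤ k) :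
    Terr n (k + 1) = Tstep n k (Terr n k) + Trem n k := by
  have hn' : (n : ℂ) ≠ 0 := Nat.cast_ne_zero.2 hn
  obtain ⟨j, rfl⟩ := Nat.exists_eq_add_of_le' hk
  apply Polynomial.funext
  intro z
  rw [Terr, Tpoly]
  simp only [Terr, Trem, Tstep, corrTerm, Nat.cast_choose_two, Nat.add_sub_cancel,
    derivative_mul, derivative_add, derivative_sub, derivative_X, derivative_C,
    derivative_X_pow, derivative_ofNat, eval_add, eval_mul, eval_sub, eval_pow, eval_C, eval_X,
    eval_one, eval_zero, eval_ofNat]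
  push_cast
  field_simp
  ring

theorem weightedNorm_one_add_X_mul_X_mul_derivative_le {r : ℝ} (hr : 0 ≤ r) {p : ℂ[X]} {k : ℕ}
    (hp : p.natDegree ≤ k) :
    weightedNorm r ((1 + X) * (X * derivative p)) ≤ (1 + r) * (k * weightedNorm r p) := by
  have h1X : weightedNorm r (1 + X : ℂ[X]) ≤ 1 + r :=
    (weightedNorm_add_le hr _ _).trans_eq (by rw [weightedNorm_one, weightedNorm_X])
  exact (weightedNorm_mul_le hr _ _).trans (mul_le_mul h1X
    (weightedNorm_X_mul_derivative_le hr hp) (weightedNorm_nonneg hr _) (by linarith))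

theorem weightedNorm_Tstep_le {r : ℝ} (hr : 0 ≤ r) {n k : ℕ} (hn : 0 < n) (hkn : k ≤ n)
    {p : ℂ[X]} (hp : p.natDegree ≤ k) :
    weightedNorm r (Tstep n k p) ≤ 2 * (r + 1) * weightedNorm r p := by
  set N := weightedNorm r p
  have hN : 0 ≤ N := weightedNorm_nonneg hr p
  have hnR : (0 : ℝ) < n := by exact_mod_cast hn
  have hknR : (k : ℝ) ≤ n := by exact_mod_cast hkn
  have hlin : weightedNorm r (C (n : ℂ) * X + C (k : ℂ)) ≤ n * r + k :=
    (weightedNorm_add_le hr _ _).trans_eq (by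
      rw [weightedNorm_C_mul, weightedNorm_X, weightedNorm_C, Complex.norm_natCast,
        Complex.norm_natCast])
  have hmul : weightedNorm r ((C (n : ℂ) * X + C (k : ℂ)) * p) ≤ (n * r + k) * N :=
    (weightedNorm_mul_le hr _ _).trans (mul_le_mul_of_nonneg_right hlin hN)
  have hkn' : (r + 2) * k / n ≤ r + 2 := by
    rw [div_le_iff₀ hnR]; exact mul_le_mul_of_nonneg_left hknR (by linarith)
  calc weightedNorm r (Tstep n k p)
      ≤ (n : ℝ)⁻¹ * ((1 + r) * (k * N) + (n * r + k) * N) := by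
        rw [Tstep, weightedNorm_C_mul, norm_inv, Complex.norm_natCast]
        gcongr
        exact (weightedNorm_add_le hr _ _).trans
          (add_le_add (weightedNorm_one_add_X_mul_X_mul_derivative_le hr hp) hmul)
    _ = (r + (r + 2) * k / n) * N := by field_simp; ring
    _ ≤ 2 * (r + 1) * N := mul_le_mul_of_nonneg_right (by linarith) hN

theorem weightedNorm_corrTerm_le {r : ℝ} (hr : 0 ≤ r) {k : ℕ} (hk : 1 ≤ k) :
    weightedNorm r (corrTerm k) ≤ 2 * (r + 1) ^ k := by
  have hX2 : weightedNorm r (X + 2 : ℂ[X]) ≤ r + 2 :=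
    (weightedNorm_add_le hr _ _).trans_eq (by
      rw [weightedNorm_X, show (2 : ℂ[X]) = C 2 from rfl, weightedNorm_C]; norm_num)
  obtain ⟨j, rfl⟩ := Nat.exists_eq_add_of_le' hk
  rw [corrTerm, mul_comm, Nat.add_sub_cancel, weightedNorm_X_pow_mul, pow_succ]
  calc r ^ j * weightedNorm r (X + 2 : ℂ[X]) ≤ (r + 1) ^ j * (r + 2) := by
        gcongr
        · exact weightedNorm_nonneg hr _
        · linarith
    _ ≤ 2 * ((r + 1) ^ j * (r + 1)) := by nlinarith [pow_nonneg (by linarith : 0 ≤ r + 1) j]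

theorem weightedNorm_Trem_le {r : ℝ} (hr : 0 ≤ r) (n : ℕ) {k : ℕ} (hk : 1 ≤ k) :
    weightedNorm r (Trem n k) ≤ k ^ 2 * (k - 1) * (r + 2) * (r + 1) ^ k / n ^ 2 := by
  set W := corrTerm k
  have hW0 : 0 ≤ weightedNorm r W := weightedNorm_nonneg hr W
  have hk1 : (0 : ℝ) ≤ k - 1 := by
    have : (1 : ℝ) ≤ k := by exact_mod_cast hk
    linarith
  have hinner : weightedNorm r ((1 + X) * (X * derivative W) + C (k : ℂ) * W)
      ≤ k * (r + 2) * weightedNorm r W := by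
    refine (weightedNorm_add_le hr _ _).trans ?_
    rw [weightedNorm_C_mul, Complex.norm_natCast]
    have := weightedNorm_one_add_X_mul_X_mul_derivative_le hr (natDegree_corrTerm_le hk)
    linarith
  have hc : ‖(k.choose 2 : ℂ) / n ^ 2‖ = k * (k - 1) / 2 / n ^ 2 := by
    rw [norm_div, norm_pow, Complex.norm_natCast, Complex.norm_natCast, Nat.cast_choose_two]
  rw [Trem, weightedNorm_C_mul, hc]
  calc k * (k - 1) / 2 / n ^ 2 * weightedNorm r ((1 + X) * (X * derivative W) + C (k : ℂ) * W)
      ≤ k * (k - 1) / 2 / n ^ 2 * (k * (r + 2) * (2 * (r + 1) ^ k)) := by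
        gcongr
        exact hinner.trans (by gcongr; exact weightedNorm_corrTerm_le hr hk)
    _ = k ^ 2 * (k - 1) * (r + 2) * (r + 1) ^ k / n ^ 2 := by ring

theorem add_one_mul_mul_sub_one_le_factorial (k : ℕ) : ((k : ℝ) + 1) * k * (k - 1) ≤ (k + 1).factorial := by
  cases k with
  | zero => simp
  | succ m =>
    rw [Nat.factorial_succ, Nat.factorial_succ]
    push_cast
    have : (m : ℝ) ≤ m.factorial := by exact_mod_cast Nat.self_le_factorial m
    rw [add_sub_cancel_right, ← mul_assoc]
    gcongr

theorem le_mul_B_succ {r : ℝ} (hr : 0 ≤ r) {k : ℕ} (hk : 2 ≤ k) :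
    2 * (k - 1) * (r + 1) * B k r + k ^ 2 * (k - 1) * (r + 2) ≤ k * (r + 1) * B (k + 1) r := by
  have hK : (2 : ℝ) ≤ k := by exact_mod_cast hk
  have hF : ((k : ℝ) + 1) * k * (k - 1) ≤ (k + 1).factorial := add_one_mul_mul_sub_one_le_factorial k
  have hF' : ((k + 1 + 1).factorial : ℝ) = (k + 2) * (k + 1).factorial := by
    rw [Nat.factorial_succ]; push_cast; ring
  set K : ℝ := (k : ℝ)
  set F : ℝ := ((k + 1).factorial : ℝ)
  set a := (K - 1) ^ 2 * (K - 2)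
  set b := 2 * (K - 1) * (K - 2) * (2 * K - 3)
  have hB : B k r = a * r ^ 2 + b * (r + 1) + (r + 1) * (r + 2) * F := rfl
  have hB' : B (k + 1) r = K ^ 2 * (K - 1) * r ^ 2 + 2 * K * (K - 1) * (2 * K - 1) * (r + 1)
      + (r + 1) * (r + 2) * (K + 2) * F := by
    rw [B, hF']; push_cast; ring
  have hK1 : 0 ≤ K ^ 2 * (K - 1) := mul_nonneg (sq_nonneg K) (by linarith)
  have hab : a * r ^ 2 + b * (r + 1) ≤ (a + b) * ((r + 1) * (r + 2)) := by
    have ha : 0 ≤ a := mul_nonneg (sq_nonneg _) (by linarith)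
    have hb : 0 ≤ b := mul_nonneg (by nlinarith) (by linarith)
    nlinarith
  -- by `hF` this reduces to `(K - 1) * g K ≥ 0` for the quartic `g` of `hg`
  have hpoly : 2 * (K - 1) * (a + b) + K ^ 2 * (K - 1) ≤ (K ^ 2 + 2) * F := by
    have hg : 0 ≤ K ^ 4 - 9 * K ^ 3 + 45 * K ^ 2 - 60 * K + 28 := by
      nlinarith [sq_nonneg (K ^ 2 - 9 / 2 * K), sq_nonneg (K - 2)]
    nlinarith [mul_le_mul_of_nonneg_left hF (by positivity : (0 : ℝ) ≤ K ^ 2 + 2),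
      mul_nonneg hg (by linarith : (0 : ℝ) ≤ K - 1)]
  calc 2 * (K - 1) * (r + 1) * B k r + K ^ 2 * (K - 1) * (r + 2)
      ≤ (r + 1) ^ 2 * (r + 2) * (2 * (K - 1) * (a + b) + K ^ 2 * (K - 1))
        + 2 * (K - 1) * (r + 1) ^ 2 * (r + 2) * F := by
        rw [hB]
        nlinarith [mul_le_mul_of_nonneg_left hab (by nlinarith : 0 ≤ 2 * (K - 1) * (r + 1)),
          mul_nonneg (mul_nonneg hK1 (by linarith : 0 ≤ r + 2))
            (by nlinarith : 0 ≤ (r + 1) ^ 2 - 1)]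
    _ ≤ (r + 1) ^ 2 * (r + 2) * ((K ^ 2 + 2) * F) + 2 * (K - 1) * (r + 1) ^ 2 * (r + 2) * F := by
        gcongr
    _ = K * (r + 1) * ((r + 1) * (r + 2) * (K + 2) * F) := by ring
    _ ≤ K * (r + 1) * B (k + 1) r := by
        rw [hB']
        gcongr
        have hb' : 0 ≤ 2 * K * (K - 1) * (2 * K - 1) := by
          have : 0 ≤ 2 * K * (K - 1) := by nlinarith
          exact mul_nonneg this (by linarith)
        nlinarith [mul_nonneg hK1 (sq_nonneg r), mul_nonneg hb' (by linarith : 0 ≤ r + 1)]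

theorem weightedNorm_Terr_le {r : ℝ} (hr : 0 ≤ r) {n : ℕ} (hn : 0 < n) {k : ℕ} (hk : 2 ≤ k)
    (hkn : k ≤ n + 1) :
    weightedNorm r (Terr n k) ≤ (k - 1) * (r + 1) ^ k * B k r / n ^ 2 := by
  induction k, hk using Nat.le_induction with
  | base => rw [Terr_two hn.ne']; norm_num [weightedNorm, B]; positivity
  | succ k hk ih =>
    have hstep := weightedNorm_Tstep_le hr hn (by omega) (natDegree_Terr_le n (k := k) (by omega))
    have hrem := weightedNorm_Trem_le hr n (k := k) (by omega)
    rw [Terr_succ hn.ne' hk]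
    calc weightedNorm r (Tstep n k (Terr n k) + Trem n k)
        ≤ 2 * (r + 1) * ((k - 1) * (r + 1) ^ k * B k r / n ^ 2)
          + k ^ 2 * (k - 1) * (r + 2) * (r + 1) ^ k / n ^ 2 := by
          refine (weightedNorm_add_le hr _ _).trans (add_le_add (hstep.trans ?_) hrem)
          gcongr
          exact ih (by omega)
      _ = (r + 1) ^ k / n ^ 2 * (2 * (k - 1) * (r + 1) * B k r + k ^ 2 * (k - 1) * (r + 2)) := by
          ring
      _ ≤ (r + 1) ^ k / n ^ 2 * (k * (r + 1) * B (k + 1) r) := by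
          gcongr
          exact le_mul_B_succ hr hk
      _ = (((k + 1 : ℕ) : ℝ) - 1) * (r + 1) ^ (k + 1) * B (k + 1) r / n ^ 2 := by
          push_cast; ring

theorem T_voronovskaja_estimate_general (r : ℝ) (n : ℕ) (hn : r + 2 < (n : ℝ))
    (k : ℕ) (hk₂ : 2 ≤ k) (hkn : k ≤ n + 1) (z : ℂ) (hz : ‖z‖ ≤ r) :
    ‖T n k z - z ^ k
        - (k : ℂ) * ((k : ℂ) - 1) * (z + 2) * z ^ (k - 1) / (2 * (n : ℂ))‖
      ≤ ((k : ℝ) - 1) * (r + 1) ^ k * B k r / (n : ℝ) ^ 2 := by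
  have hr : 0 ≤ r := (norm_nonneg z).trans hz
  have hn₀ : 0 < n := by exact_mod_cast (by linarith : (0 : ℝ) < n)
  have heval : T n k z - z ^ k - (k : ℂ) * ((k : ℂ) - 1) * (z + 2) * z ^ (k - 1) / (2 * (n : ℂ))
      = (Terr n k).eval z := by
    simp only [T_eq_eval, Terr, corrTerm, Nat.cast_choose_two, eval_sub, eval_mul, eval_add,
      eval_pow, eval_C, eval_X, eval_ofNat]
    ring
  rw [heval]
  exact (norm_eval_le_weightedNorm _ hz).trans (weightedNorm_Terr_le hr hn₀ hk₂ hkn)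

/-- For `r ≥ 1`, `n > r + 2`, `2 ≤ k ≤ n + 1` and `|z| ≤ r`,
`|T_{n,k}(z) − z^k − k(k−1)(z+2)z^{k−1}/(2n)| ≤ (k−1)(r+1)^k B_{k,r} / n²`. -/
theorem T_voronovskaja_estimate (r : ℝ) (hr : 1 ≤ r) (n : ℕ) (hn : r + 2 < (n : ℝ))
    (k : ℕ) (hk₂ : 2 ≤ k) (hkn : k ≤ n + 1) (z : ℂ) (hz : ‖z‖ ≤ r) :
    ‖T n k z - z ^ k
        - (k : ℂ) * ((k : ℂ) - 1) * (z + 2) * z ^ (k - 1) / (2 * (n : ℂ))‖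
      ≤ ((k : ℝ) - 1) * (r + 1) ^ k * B k r / (n : ℝ) ^ 2 :=
  T_voronovskaja_estimate_general r n hn k hk₂ hkn z hz
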